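/- arXiv:2006.13271 — 5 statements merged into one kernel-verified Lean document; each statement's English description precedes it below -/
import Mathlib

section
/- Let B = ℂ[x,y], regarded as an algebra over R = ℂ[t] via the ℂ-algebra map t ↦ xy. The map δ = x∂ₓ − y∂_y is an R-linear derivation of B (it kills xy), and it induces a B-linear map λ : Ω_{B/R} → B on Kähler differentials with λ(dx) = x and λ(dy) = −y. Then λ is injective and its image is exactly the ideal (x, y) of B. -/
/-!
STATEMENT 2. Let `B = ℂ[x,y]` over `R = ℂ[t]` via `t ↦ xy`. The derivation
`δ = x∂ₓ − y∂_y` is `R`-linear and induces a `B`-linear map `λ : Ω_{B/R} → B` with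
`λ(dx) = x`, `λ(dy) = −y`. Then `λ` is injective with image exactly the ideal `(x,y)`.
-/

open MvPolynomial

noncomputable section

/-- The polynomial ring `B = ℂ[x,y]`, with `x = X 0`, `y = X 1`. -/
abbrev B : Type := MvPolynomial (Fin 2) ℂ

/-- `B` as an algebra over `R = ℂ[t]` via `t ↦ xy`. -/
instance : Algebra (Polynomial ℂ) B :=
  (Polynomial.aeval (X 0 * X 1 : B)).toRingHom.toAlgebra

/-!
`Ω_{B/R}` is generated by `dx` and `dy`, and `λ(f dx + g dy) = fx − gy`. As `x` and `y` are
non-associate primes, `fx = gy` forces `(f, g) = q (y, x)`, and then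
`f dx + g dy = q d(xy)`, which vanishes because `xy` comes from `R`. The image is spanned by
`λ(dx) = x` and `λ(dy) = −y`.
-/

namespace Derivation

variable {S R A M : Type*} [CommSemiring S] [CommSemiring R] [CommSemiring A] [AddCommMonoid M]
  [Algebra S A] [Algebra R A] [Module A M] [Module S M] [Module R M] [IsScalarTower R A M]

def ofMapAlgebraMapEqZero (D : Derivation S A M) (h : ∀ r : R, D (algebraMap R A r) = 0) :
    Derivation R A M where
  toFun := D
  map_add' := D.map_add
  map_smul' r a := by
    rw [Algebra.smul_def, D.leibniz, h, smul_zero, add_zero, algebraMap_smul]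
    rfl
  map_one_eq_zero' := D.map_one_eq_zero
  leibniz' := D.leibniz

@[simp]
lemma ofMapAlgebraMapEqZero_apply (D : Derivation S A M) (h : ∀ r : R, D (algebraMap R A r) = 0)
    (a : A) : D.ofMapAlgebraMapEqZero h a = D a := rfl

end Derivation

section Kaehler

open KaehlerDifferential

variable {R S M : Type*} [CommRing R] [CommRing S] [Algebra R S] [AddCommGroup M] [Module S M]
  [Module R M] [IsScalarTower R S M]

lemma KaehlerDifferential.span_D_image_eq_top {s : Set S} (hs : Algebra.adjoin R s = ⊤) :
    Submodule.span S (D R S '' s) = ⊤ := by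
  rw [eq_top_iff, ← span_range_derivation, Submodule.span_le]
  rintro _ ⟨a, rfl⟩
  have ha : a ∈ Algebra.adjoin R s := hs ▸ Algebra.mem_top
  induction ha using Algebra.adjoin_induction with
  | mem x hx => exact Submodule.subset_span ⟨x, hx, rfl⟩
  | algebraMap r => simp
  | add x y _ _ hx hy => rw [map_add]; exact add_mem hx hy
  | mul x y _ _ hx hy =>
    rw [Derivation.leibniz]; exact add_mem (Submodule.smul_mem _ _ hy) (Submodule.smul_mem _ _ hx)

lemma Derivation.range_liftKaehlerDifferential_eq_span (δ : Derivation R S M) {s : Set S}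
    (hs : Algebra.adjoin R s = ⊤) :
    LinearMap.range δ.liftKaehlerDifferential = Submodule.span S (δ '' s) := by
  rw [LinearMap.range_eq_map, ← span_D_image_eq_top hs, Submodule.map_span, Set.image_image]
  simp_rw [Derivation.liftKaehlerDifferential_comp_D]

end Kaehler

lemma MvPolynomial.exists_eq_mul_X_of_mul_X_eq_mul_X {σ R : Type*} [CommRing R] [IsDomain R]
    {i j : σ} (hij : i ≠ j) {f g : MvPolynomial σ R} (h : f * X i = g * X j) :
    ∃ q, f = q * X j ∧ g = q * X i := by
  obtain ⟨q, rfl⟩ : X i ∣ g := by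
    have : X i ∣ g * X j := h ▸ dvd_mul_left _ _
    simpa [X_dvd_mul_iff, X_dvd_X, hij] using this
  refine ⟨q, mul_right_cancel₀ (X_ne_zero i) ?_, mul_comm _ _⟩
  rw [h]; ring

namespace Node

open KaehlerDifferential

lemma algebraMap_eq_aeval (p : Polynomial ℂ) :
    algebraMap (Polynomial ℂ) B p = Polynomial.aeval (X 0 * X 1 : B) p := rfl

lemma adjoin_X_eq_top : Algebra.adjoin (Polynomial ℂ) {(X 0 : B), X 1} = ⊤ := by
  rw [eq_top_iff]
  rintro b -
  induction b using MvPolynomial.induction_on with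
  | C a =>
    have hC : (C a : B) = algebraMap (Polynomial ℂ) B (Polynomial.C a) := by
      simp [algebraMap_eq_aeval]
    exact hC ▸ Subalgebra.algebraMap_mem _ _
  | add p q hp hq => exact add_mem hp hq
  | mul_X p i hp =>
    refine mul_mem hp (Algebra.subset_adjoin ?_)
    fin_cases i <;> simp

def δ : Derivation (Polynomial ℂ) B B :=
  (mkDerivation ℂ ![X 0, -X 1]).ofMapAlgebraMapEqZero fun p ↦ by
    rw [algebraMap_eq_aeval, Derivation.map_aeval, Derivation.leibniz]
    simp [mkDerivation_X, smul_eq_mul, mul_comm]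

lemma δ_X_zero : δ (X 0) = X 0 := by simp [δ, mkDerivation_X]

lemma δ_X_one : δ (X 1) = -X 1 := by simp [δ, mkDerivation_X]

lemma D_X_zero_mul_X_one : D (Polynomial ℂ) B (X 0 * X 1) = 0 := by
  have hxy : (X 0 * X 1 : B) = algebraMap (Polynomial ℂ) B Polynomial.X :=
    (Polynomial.aeval_X _).symm
  rw [hxy, Derivation.map_algebraMap]

lemma liftKaehlerDifferential_δ_injective : Function.Injective δ.liftKaehlerDifferential := by
  refine (injective_iff_map_eq_zero _).2 fun ω hω ↦ ?_
  have hspan : ω ∈ Submodule.span B {D (Polynomial ℂ) B (X 0), D (Polynomial ℂ) B (X 1)} := by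
    rw [← Set.image_pair, span_D_image_eq_top adjoin_X_eq_top]; trivial
  obtain ⟨f, g, rfl⟩ := Submodule.mem_span_pair.1 hspan
  simp only [map_add, map_smul, Derivation.liftKaehlerDifferential_comp_D, δ_X_zero, δ_X_one,
    smul_eq_mul] at hω
  obtain ⟨q, rfl, rfl⟩ :=
    exists_eq_mul_X_of_mul_X_eq_mul_X (f := f) (g := g) (by decide : (0 : Fin 2) ≠ 1)
      (by linear_combination hω)
  rw [mul_smul, mul_smul, ← smul_add, add_comm, ← Derivation.leibniz, D_X_zero_mul_X_one,
    smul_zero]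

lemma range_liftKaehlerDifferential_δ :
    LinearMap.range δ.liftKaehlerDifferential = (Ideal.span {X 0, X 1} : Ideal B) := by
  rw [δ.range_liftKaehlerDifferential_eq_span adjoin_X_eq_top, Set.image_pair, δ_X_zero, δ_X_one,
    ← Ideal.span_pair_neg]

end Node

theorem differentials_to_dualizing_injective :
    ∃ δ : Derivation (Polynomial ℂ) B B,
      δ (X 0) = X 0 ∧ δ (X 1) = -X 1 ∧
      Function.Injective δ.liftKaehlerDifferential ∧
      LinearMap.range δ.liftKaehlerDifferential = (Ideal.span {X 0, X 1} : Ideal B) :=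
  ⟨Node.δ, Node.δ_X_zero, Node.δ_X_one, Node.liftKaehlerDifferential_δ_injective,
    Node.range_liftKaehlerDifferential_δ⟩

end
end

section
/- Let B = ℂ[x,y], regarded as an algebra over R = ℂ[t] via t ↦ xy. Then the ℂ-linear map B × ℂ[y] → Ω_{B/R} sending (f, g) to f·dx + g(y)·dy is bijective; that is, every Kähler differential of B over R can be written uniquely in the form f(x,y)·dx + g(y)·dy with f ∈ ℂ[x,y] and g a polynomial in y alone. -/
/-!
STATEMENT 3. Let `B = ℂ[x,y]` over `R = ℂ[t]` via `t ↦ xy`. The map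
`B × ℂ[y] → Ω_{B/R}`, `(f, g) ↦ f·dx + g(y)·dy`, is bijective.
-/

open MvPolynomial

noncomputable section

lemma algebraMap_def (r : Polynomial ℂ) :
    algebraMap (Polynomial ℂ) B r = Polynomial.aeval (X 0 * X 1 : B) r := rfl

instance : IsScalarTower ℂ (Polynomial ℂ) B :=
  IsScalarTower.of_algebraMap_eq fun a => by
    simp [algebraMap_def, Polynomial.algebraMap_eq]

/-- relation submodule -/
def N : Submodule B (B × B) := Submodule.span B {((X 1 : B), (X 0 : B))}

abbrev M : Type := (B × B) ⧸ N

def mkM : (B × B) →ₗ[B] M := N.mkQ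

/-- the `ℂ`-derivation `B → M` sending `x ↦ e₁`, `y ↦ e₂`. -/
def D0 : Derivation ℂ B M :=
  mkDerivation ℂ (fun i => mkM (if i = 0 then (1, 0) else (0, 1)))

lemma D0_X0 : D0 (X 0) = mkM (1, 0) := by simp [D0, mkDerivation_X]
lemma D0_X1 : D0 (X 1) = mkM (0, 1) := by simp [D0, mkDerivation_X]

lemma D0_xy : D0 (X 0 * X 1) = 0 := by
  rw [D0.leibniz, D0_X0, D0_X1, ← map_smul, ← map_smul, ← map_add]
  have : (X 0 : B) • ((0:B), (1:B)) + (X 1 : B) • ((1:B), (0:B)) = ((X 1 : B), (X 0 : B)) := by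
    simp [Prod.ext_iff]
  rw [this]
  exact (Submodule.Quotient.mk_eq_zero N).mpr (Submodule.mem_span_singleton_self _)

lemma D0_algebraMap (r : Polynomial ℂ) : D0 (algebraMap (Polynomial ℂ) B r) = 0 := by
  rw [algebraMap_def]
  induction r using Polynomial.induction_on with
  | C a => simp [Polynomial.aeval_C, Derivation.map_algebraMap]
  | add p q hp hq => simp [hp, hq]
  | monomial n a h =>
      rw [pow_succ, ← mul_assoc, map_mul, Polynomial.aeval_X, D0.leibniz, h, D0_xy]
      simp

/-- upgrade to `R`-derivation. -/
def D1 : Derivation (Polynomial ℂ) B M where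
  toFun := D0
  map_add' := D0.map_add
  map_smul' r b := by
    simp only [RingHom.id_apply]
    rw [Algebra.smul_def, D0.leibniz, D0_algebraMap, smul_zero, add_zero,
      algebraMap_smul]
  map_one_eq_zero' := D0.map_one_eq_zero
  leibniz' := D0.leibniz

lemma D1_apply (b : B) : D1 b = D0 b := rfl

abbrev Ω := Ω[B⁄Polynomial ℂ]

def φ : Ω →ₗ[B] M := D1.liftKaehlerDifferential

def ψ0 : (B × B) →ₗ[B] Ω :=
  (LinearMap.toSpanSingleton B Ω (KaehlerDifferential.D (Polynomial ℂ) B (X 0))).coprod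
    (LinearMap.toSpanSingleton B Ω (KaehlerDifferential.D (Polynomial ℂ) B (X 1)))

lemma ψ0_apply (a b : B) : ψ0 (a, b) =
    a • KaehlerDifferential.D (Polynomial ℂ) B (X 0) +
    b • KaehlerDifferential.D (Polynomial ℂ) B (X 1) := rfl

lemma ψ0_rel : ψ0 ((X 1 : B), (X 0 : B)) = 0 := by
  rw [ψ0_apply, add_comm, ← Derivation.leibniz]
  have : (X 0 * X 1 : B) = algebraMap (Polynomial ℂ) B Polynomial.X := by
    simp [algebraMap_def]
  rw [this, Derivation.map_algebraMap]

def ψ : M →ₗ[B] Ω :=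
  Submodule.liftQ N ψ0 (by
    rw [N, Submodule.span_le, Set.singleton_subset_iff]
    exact ψ0_rel)

lemma ψ_mk (a b : B) : ψ (mkM (a, b)) = ψ0 (a, b) := rfl

lemma ψ_D0 (b : B) : ψ (D0 b) = KaehlerDifferential.D (Polynomial ℂ) B b := by
  have : ψ.compDer D0 =
      ((KaehlerDifferential.D (Polynomial ℂ) B).restrictScalars ℂ) := by
    apply derivation_ext
    intro i
    fin_cases i <;>
    · show ψ (D0 _) = KaehlerDifferential.D (Polynomial ℂ) B _
      first
      | (rw [show (X (⟨0, by omega⟩ : Fin 2) : B) = X 0 from rfl, D0_X0, ψ_mk, ψ0_apply]; simp)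
      | (rw [show (X (⟨1, by omega⟩ : Fin 2) : B) = X 1 from rfl, D0_X1, ψ_mk, ψ0_apply]; simp)
  have h2 := Derivation.congr_fun this b
  simpa using h2

lemma φ_D (b : B) : φ (KaehlerDifferential.D (Polynomial ℂ) B b) = D0 b :=
  D1.liftKaehlerDifferential_comp_D b

lemma ψ_φ : ψ.comp φ = LinearMap.id := by
  apply Derivation.liftKaehlerDifferential_unique
  ext b
  show ψ (φ (KaehlerDifferential.D (Polynomial ℂ) B b)) = KaehlerDifferential.D (Polynomial ℂ) B b
  rw [φ_D, ψ_D0]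

lemma φ_ψ (m : M) : φ (ψ m) = m := by
  obtain ⟨⟨a, b⟩, rfl⟩ := Submodule.Quotient.mk_surjective N m
  show φ (ψ (mkM (a, b))) = mkM (a, b)
  rw [ψ_mk, ψ0_apply, map_add, map_smul, map_smul, φ_D, φ_D, D0_X0, D0_X1,
    ← map_smul, ← map_smul, ← map_add]
  congr 1
  simp [Prod.ext_iff]

lemma ψ_bij : Function.Bijective ψ := by
  constructor
  · intro m m' h
    have := congrArg φ h
    rwa [φ_ψ, φ_ψ] at this
  · intro ω
    exact ⟨φ ω, by have := LinearMap.congr_fun ψ_φ ω; simpa using this⟩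

def σ' : B →ₐ[ℂ] Polynomial ℂ := aeval ![0, Polynomial.X]

def ι : Polynomial ℂ →ₐ[ℂ] B := Polynomial.aeval (X 1)

lemma σ_ι (g : Polynomial ℂ) : σ' (ι g) = g := by
  rw [ι, ← Polynomial.aeval_algHom_apply]
  simp [σ']

lemma σ_X0 : σ' (X 0) = 0 := by simp [σ']

lemma div_lemma (b : B) : ∃ q : B, b = X 0 * q + ι (σ' b) := by
  induction b using MvPolynomial.induction_on with
  | C a => exact ⟨0, by simp [σ', ι, Polynomial.aeval_C, algebraMap_eq]⟩
  | add p q hp hq =>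
      obtain ⟨q1, h1⟩ := hp
      obtain ⟨q2, h2⟩ := hq
      exact ⟨q1 + q2, by rw [map_add, map_add]; linear_combination h1 + h2⟩
  | mul_X p i hp =>
      obtain ⟨q, hq⟩ := hp
      fin_cases i
      · refine ⟨p, ?_⟩
        show p * X 0 = X 0 * p + ι (σ' (p * X 0))
        have : σ' (p * X 0) = 0 := by rw [map_mul, σ_X0, mul_zero]
        rw [this, map_zero, add_zero, mul_comm]
      · refine ⟨q * X 1, ?_⟩
        show p * X 1 = X 0 * (q * X 1) + ι (σ' (p * X 1))
        have h1 : σ' (p * X 1) = σ' p * Polynomial.X := by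
          rw [map_mul]; congr 1; simp [σ']
        have h2 : ι Polynomial.X = X 1 := by simp [ι]
        rw [h1, map_mul, h2]
        linear_combination (X 1 : B) * hq

theorem kaehler_differentials_normal_form :
    Function.Bijective (fun p : B × Polynomial ℂ =>
      p.1 • (KaehlerDifferential.D (Polynomial ℂ) B (X 0)) +
        (Polynomial.aeval (X 1 : B) p.2) • (KaehlerDifferential.D (Polynomial ℂ) B (X 1))) := by
  have key : (fun p : B × Polynomial ℂ =>
      p.1 • (KaehlerDifferential.D (Polynomial ℂ) B (X 0)) +
        (Polynomial.aeval (X 1 : B) p.2) • (KaehlerDifferential.D (Polynomial ℂ) B (X 1)))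
      = ψ ∘ (fun p : B × Polynomial ℂ => mkM (p.1, ι p.2)) := by
    funext p
    simp [ψ_mk, ψ0_apply, ι]
  rw [key]
  apply ψ_bij.comp
  constructor
  · rintro ⟨f, g⟩ ⟨f', g'⟩ h
    simp only at h
    have hmem : (((f : B), ι g) - ((f' : B), ι g')) ∈ N :=
      (Submodule.Quotient.eq N).mp h
    rw [N, Submodule.mem_span_singleton] at hmem
    obtain ⟨h0, hh⟩ := hmem
    have h1 : h0 * X 1 = f - f' := congrArg Prod.fst hh
    have h2 : h0 * X 0 = ι g - ι g' := congrArg Prod.snd hh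
    have hg : g = g' := by
      have := congrArg σ' h2
      rw [map_mul, σ_X0, mul_zero, map_sub, σ_ι, σ_ι] at this
      exact (sub_eq_zero.mp this.symm).symm.symm
    have hz : h0 * X 0 = 0 := by rw [h2, hg, sub_self]
    have h0z : h0 = 0 := by
      rcases mul_eq_zero.mp hz with h | h
      · exact h
      · exact absurd h (MvPolynomial.X_ne_zero 0)
    have hf : f = f' := by
      have := h1; rw [h0z, zero_mul] at this
      exact sub_eq_zero.mp this.symm
    rw [Prod.ext_iff]; exact ⟨hf, hg⟩
  · intro m
    obtain ⟨⟨a, b⟩, rfl⟩ := Submodule.Quotient.mk_surjective N m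
    obtain ⟨q, hq⟩ := div_lemma b
    refine ⟨(a - q * X 1, σ' b), ?_⟩
    show mkM _ = mkM _
    rw [← sub_eq_zero, ← map_sub, mkM, Submodule.mkQ_apply, Submodule.Quotient.mk_eq_zero]
    have : ((a - q * X 1, ι (σ' b)) : B × B) - (a, b) = (-q) • ((X 1 : B), (X 0 : B)) := by
      rw [Prod.ext_iff]
      constructor
      · show a - q * X 1 - a = -q * X 1
        ring
      · show ι (σ' b) - b = -q * X 0
        linear_combination -hq
    rw [this]
    exact Submodule.smul_mem _ _ (Submodule.mem_span_singleton_self _)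

end
end

section
/- The ring A is a free ℂ[t]-module with basis consisting of: the element 1, the elements z̄₁ⁿ for n ≥ 1, the elements z̄₂ⁿ for n ≥ 1, the elements z̄₁ⁿθ̄₁ for n ≥ 0, and the elements z̄₂ⁿθ̄₂ for n ≥ 0. -/
open MvPolynomial

noncomputable section

/-- The polynomial ring `ℂ[t,z₁,z₂,θ₁,θ₂]`:
variables `X 0 = t`, `X 1 = z₁`, `X 2 = z₂`, `X 3 = θ₁`, `X 4 = θ₂`. -/
abbrev P5 : Type := MvPolynomial (Fin 5) ℂ

/-- The ideal `(z₁z₂ + t², z₁θ₂ − tθ₁, z₂θ₁ + tθ₂, θ₁θ₂, θ₁², θ₂²)` of relations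
of Deligne's miniversal deformation of the NS node. -/
def nsIdeal : Ideal P5 :=
  Ideal.span {X 1 * X 2 + X 0 ^ 2, X 1 * X 4 - X 0 * X 3, X 2 * X 3 + X 0 * X 4,
    X 3 * X 4, X 3 ^ 2, X 4 ^ 2}

/-- The coordinate ring `A` of Deligne's miniversal deformation of the NS node. -/
abbrev ANode : Type := P5 ⧸ nsIdeal

/-- `t̄ ∈ A`. -/
def tb : ANode := Ideal.Quotient.mk nsIdeal (X 0)
/-- `z̄₁ ∈ A`. -/
def z1 : ANode := Ideal.Quotient.mk nsIdeal (X 1)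
/-- `z̄₂ ∈ A`. -/
def z2 : ANode := Ideal.Quotient.mk nsIdeal (X 2)
/-- `θ̄₁ ∈ A`. -/
def th1 : ANode := Ideal.Quotient.mk nsIdeal (X 3)
/-- `θ̄₂ ∈ A`. -/
def th2 : ANode := Ideal.Quotient.mk nsIdeal (X 4)

/-- `A` as a `ℂ[t]`-algebra via `t ↦ t̄`. -/
instance : Algebra (Polynomial ℂ) ANode := (Polynomial.aeval tb).toRingHom.toAlgebra


/-- Index type for the `ℂ[t]`-basis: `1`; `z̄₁ⁿ (n ≥ 1)`; `z̄₂ⁿ (n ≥ 1)`;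
`z̄₁ⁿθ̄₁ (n ≥ 0)`; `z̄₂ⁿθ̄₂ (n ≥ 0)`. -/
abbrev BasisIdx : Type := Unit ⊕ ℕ ⊕ ℕ ⊕ ℕ ⊕ ℕ

/-- The claimed `ℂ[t]`-basis of `A`. -/
def aBasis : BasisIdx → ANode
  | Sum.inl _ => 1
  | Sum.inr (Sum.inl n) => z1 ^ (n + 1)
  | Sum.inr (Sum.inr (Sum.inl n)) => z2 ^ (n + 1)
  | Sum.inr (Sum.inr (Sum.inr (Sum.inl n))) => z1 ^ n * th1
  | Sum.inr (Sum.inr (Sum.inr (Sum.inr n))) => z2 ^ n * th2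

/-!
`A` embeds into `ℂ[t][u, u⁻¹][ε]` (with `ε² = 0`) via `t ↦ t`, `z₁ ↦ u²`, `z₂ ↦ -t²u⁻²`,
`θ₁ ↦ εu`, `θ₂ ↦ εtu⁻¹`. Adding the two components `a + εb ↦ a + b` is `ℂ[t]`-linear and sends
the proposed basis to nonzero `ℂ[t]`-multiples of the pairwise distinct powers
`1, u^{2n}, u^{-2n}, u^{2n+1}, u^{-(2n+1)}`, so the family is linearly independent.
It spans because its span contains `1` and, by the defining relations, is stable under
multiplication by `t̄, z̄₁, z̄₂, θ̄₁, θ̄₂`.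
-/

open scoped Polynomial LaurentPolynomial
open LaurentPolynomial (T)
open TrivSqZeroExt DualNumber

theorem LaurentPolynomial.linearIndependent_of_eq_C_mul_T {R ι : Type*} [Ring R]
    [NoZeroDivisors R] {v : ι → R[T;T⁻¹]} {d : ι → ℤ} (hd : d.Injective)
    (hv : ∀ i, ∃ c ≠ 0, v i = C c * T (d i)) : LinearIndependent R v := by
  choose c hc0 hc using hv
  rw [linearIndependent_iff']
  intro s g hg i hi
  have hcoeff := congrArg (fun f => f.coeff (d i)) hg
  simp only [AddMonoidAlgebra.coeff_sum, Finsupp.finsetSum_apply,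
    AddMonoidAlgebra.coeff_smul_apply, hc, ← LaurentPolynomial.single_eq_C_mul_T,
    AddMonoidAlgebra.coeff_single, Finsupp.single_apply, smul_eq_mul, mul_ite, mul_zero] at hcoeff
  rw [Finset.sum_eq_single_of_mem i hi (fun j _ hji => if_neg (hd.ne hji)), if_pos rfl] at hcoeff
  simpa [hc0 i] using hcoeff

lemma DualNumber.fst_add_snd_inl {R : Type*} [Semiring R] (a : R) :
    fst (inl a : R[ε]) + snd (inl a : R[ε]) = a := by
  simp

lemma DualNumber.fst_add_snd_inl_mul_eps {R : Type*} [Semiring R] (a : R) :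
    fst (inl a * ε : R[ε]) + snd (inl a * ε : R[ε]) = a := by
  simp

lemma z1_mul_z2 : z1 * z2 = -tb ^ 2 := by
  have h : Ideal.Quotient.mk nsIdeal (X 1 * X 2 + X 0 ^ 2) = 0 :=
    Ideal.Quotient.eq_zero_iff_mem.2 (Ideal.subset_span (by simp))
  rw [map_add, map_mul, map_pow] at h
  rw [z1, z2, tb]
  linear_combination h

lemma z1_mul_th2 : z1 * th2 = tb * th1 := by
  have h : Ideal.Quotient.mk nsIdeal (X 1 * X 4 - X 0 * X 3) = 0 :=
    Ideal.Quotient.eq_zero_iff_mem.2 (Ideal.subset_span (by simp))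
  rw [map_sub, map_mul, map_mul] at h
  rw [z1, th2, tb, th1]
  linear_combination h

lemma z2_mul_th1 : z2 * th1 = -(tb * th2) := by
  have h : Ideal.Quotient.mk nsIdeal (X 2 * X 3 + X 0 * X 4) = 0 :=
    Ideal.Quotient.eq_zero_iff_mem.2 (Ideal.subset_span (by simp))
  rw [map_add, map_mul, map_mul] at h
  rw [z2, th1, tb, th2]
  linear_combination h

lemma th1_mul_th2 : th1 * th2 = 0 := by
  have h : Ideal.Quotient.mk nsIdeal (X 3 * X 4) = 0 :=
    Ideal.Quotient.eq_zero_iff_mem.2 (Ideal.subset_span (by simp))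
  rwa [map_mul] at h

lemma th1_mul_self : th1 * th1 = 0 := by
  have h : Ideal.Quotient.mk nsIdeal (X 3 ^ 2) = 0 :=
    Ideal.Quotient.eq_zero_iff_mem.2 (Ideal.subset_span (by simp))
  rwa [map_pow, sq] at h

lemma th2_mul_self : th2 * th2 = 0 := by
  have h : Ideal.Quotient.mk nsIdeal (X 4 ^ 2) = 0 :=
    Ideal.Quotient.eq_zero_iff_mem.2 (Ideal.subset_span (by simp))
  rwa [map_pow, sq] at h

section Spanning

local notation "𝒮" => Submodule.span ℂ[X] (Set.range aBasis)

lemma aBasis_mem_span (α : BasisIdx) : aBasis α ∈ 𝒮 :=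
  Submodule.subset_span ⟨α, rfl⟩

lemma tb_mul_mem_span {x : ANode} (hx : x ∈ 𝒮) : tb * x ∈ 𝒮 := by
  have h := Submodule.smul_mem _ Polynomial.X hx
  rwa [Algebra.smul_def, show algebraMap ℂ[X] ANode Polynomial.X = tb from Polynomial.aeval_X tb]
    at h

lemma z1_pow_mem_span (n : ℕ) : z1 ^ n ∈ 𝒮 := by
  rcases n with _ | n
  · rw [pow_zero]; exact aBasis_mem_span (Sum.inl ())
  · exact aBasis_mem_span (Sum.inr (Sum.inl n))

lemma z2_pow_mem_span (n : ℕ) : z2 ^ n ∈ 𝒮 := by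
  rcases n with _ | n
  · rw [pow_zero]; exact aBasis_mem_span (Sum.inl ())
  · exact aBasis_mem_span (Sum.inr (Sum.inr (Sum.inl n)))

lemma z1_pow_mul_th1_mem_span (n : ℕ) : z1 ^ n * th1 ∈ 𝒮 :=
  aBasis_mem_span (Sum.inr (Sum.inr (Sum.inr (Sum.inl n))))

lemma z2_pow_mul_th2_mem_span (n : ℕ) : z2 ^ n * th2 ∈ 𝒮 :=
  aBasis_mem_span (Sum.inr (Sum.inr (Sum.inr (Sum.inr n))))

lemma mul_mem_span_of_forall_mul_aBasis_mem {a x : ANode} (ha : ∀ α, a * aBasis α ∈ 𝒮)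
    (hx : x ∈ 𝒮) : a * x ∈ 𝒮 := by
  refine (Submodule.map_span_le (LinearMap.mulLeft ℂ[X] a) _ _).2 ?_ (Submodule.mem_map_of_mem hx)
  rintro _ ⟨α, rfl⟩
  exact ha α

lemma z1_mul_mem_span {x : ANode} (hx : x ∈ 𝒮) : z1 * x ∈ 𝒮 := by
  refine mul_mem_span_of_forall_mul_aBasis_mem (fun α => ?_) hx
  rcases α with _ | n | n | n | (_ | n) <;> dsimp only [aBasis]
  · simpa using z1_pow_mem_span 1
  · rw [← pow_succ']; exact z1_pow_mem_span _
  · rw [show z1 * z2 ^ (n + 1) = -(tb * (tb * z2 ^ n)) by linear_combination z2 ^ n * z1_mul_z2]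
    exact neg_mem (tb_mul_mem_span (tb_mul_mem_span (z2_pow_mem_span n)))
  · rw [← mul_assoc, ← pow_succ']; exact z1_pow_mul_th1_mem_span _
  · rw [show z1 * (z2 ^ 0 * th2) = tb * (z1 ^ 0 * th1) by linear_combination z1_mul_th2]
    exact tb_mul_mem_span (z1_pow_mul_th1_mem_span 0)
  · rw [show z1 * (z2 ^ (n + 1) * th2) = -(tb * (tb * (z2 ^ n * th2))) by
      linear_combination z2 ^ n * th2 * z1_mul_z2]
    exact neg_mem (tb_mul_mem_span (tb_mul_mem_span (z2_pow_mul_th2_mem_span n)))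

lemma z2_mul_mem_span {x : ANode} (hx : x ∈ 𝒮) : z2 * x ∈ 𝒮 := by
  refine mul_mem_span_of_forall_mul_aBasis_mem (fun α => ?_) hx
  rcases α with _ | n | n | (_ | n) | n <;> dsimp only [aBasis]
  · simpa using z2_pow_mem_span 1
  · rw [show z2 * z1 ^ (n + 1) = -(tb * (tb * z1 ^ n)) by linear_combination z1 ^ n * z1_mul_z2]
    exact neg_mem (tb_mul_mem_span (tb_mul_mem_span (z1_pow_mem_span n)))
  · rw [← pow_succ']; exact z2_pow_mem_span _
  · rw [show z2 * (z1 ^ 0 * th1) = -(tb * (z2 ^ 0 * th2)) by linear_combination z2_mul_th1]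
    exact neg_mem (tb_mul_mem_span (z2_pow_mul_th2_mem_span 0))
  · rw [show z2 * (z1 ^ (n + 1) * th1) = -(tb * (tb * (z1 ^ n * th1))) by
      linear_combination z1 ^ n * th1 * z1_mul_z2]
    exact neg_mem (tb_mul_mem_span (tb_mul_mem_span (z1_pow_mul_th1_mem_span n)))
  · rw [← mul_assoc, ← pow_succ']; exact z2_pow_mul_th2_mem_span _

lemma th1_mul_mem_span {x : ANode} (hx : x ∈ 𝒮) : th1 * x ∈ 𝒮 := by
  refine mul_mem_span_of_forall_mul_aBasis_mem (fun α => ?_) hx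
  rcases α with _ | n | n | n | n <;> dsimp only [aBasis]
  · simpa using z1_pow_mul_th1_mem_span 0
  · rw [mul_comm]; exact z1_pow_mul_th1_mem_span _
  · rw [show th1 * z2 ^ (n + 1) = -(tb * (z2 ^ n * th2)) by
      linear_combination z2 ^ n * z2_mul_th1]
    exact neg_mem (tb_mul_mem_span (z2_pow_mul_th2_mem_span n))
  · rw [show th1 * (z1 ^ n * th1) = 0 by linear_combination z1 ^ n * th1_mul_self]
    exact zero_mem _
  · rw [show th1 * (z2 ^ n * th2) = 0 by linear_combination z2 ^ n * th1_mul_th2]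
    exact zero_mem _

lemma th2_mul_mem_span {x : ANode} (hx : x ∈ 𝒮) : th2 * x ∈ 𝒮 := by
  refine mul_mem_span_of_forall_mul_aBasis_mem (fun α => ?_) hx
  rcases α with _ | n | n | n | n <;> dsimp only [aBasis]
  · simpa using z2_pow_mul_th2_mem_span 0
  · rw [show th2 * z1 ^ (n + 1) = tb * (z1 ^ n * th1) by linear_combination z1 ^ n * z1_mul_th2]
    exact tb_mul_mem_span (z1_pow_mul_th1_mem_span n)
  · rw [mul_comm]; exact z2_pow_mul_th2_mem_span _
  · rw [show th2 * (z1 ^ n * th1) = 0 by linear_combination z1 ^ n * th1_mul_th2]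
    exact zero_mem _
  · rw [show th2 * (z2 ^ n * th2) = 0 by linear_combination z2 ^ n * th2_mul_self]
    exact zero_mem _

theorem span_range_aBasis_eq_top : 𝒮 = ⊤ := by
  refine Submodule.eq_top_iff'.2 fun x => ?_
  obtain ⟨p, rfl⟩ := Ideal.Quotient.mk_surjective x
  induction p using MvPolynomial.induction_on with
  | C c =>
    have hc : Ideal.Quotient.mk nsIdeal (C c) = Polynomial.C c • aBasis (Sum.inl ()) := by
      rw [Algebra.smul_def, aBasis, mul_one]
      exact (Polynomial.aeval_C tb c).symm
    rw [hc]
    exact Submodule.smul_mem _ _ (aBasis_mem_span _)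
  | add p q hp hq => rw [map_add]; exact add_mem hp hq
  | mul_X p i hp =>
    rw [map_mul, mul_comm]
    fin_cases i
    exacts [tb_mul_mem_span hp, z1_mul_mem_span hp, z2_mul_mem_span hp, th1_mul_mem_span hp,
      th2_mul_mem_span hp]

end Spanning

section LinearIndependence

def nodeModelGens : Fin 5 → ℂ[X][T;T⁻¹][ε] :=
  ![inl (LaurentPolynomial.C Polynomial.X), inl (T 1) ^ 2,
    -(inl (LaurentPolynomial.C Polynomial.X) ^ 2 * inl (T (-1)) ^ 2), inl (T 1) * ε,
    inl (LaurentPolynomial.C Polynomial.X) * inl (T (-1)) * ε]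

lemma nsIdeal_le_ker_aeval_nodeModelGens : nsIdeal ≤ RingHom.ker (aeval nodeModelGens) := by
  set τ : ℂ[X][T;T⁻¹][ε] := inl (LaurentPolynomial.C Polynomial.X)
  set υ : ℂ[X][T;T⁻¹][ε] := inl (T 1)
  set υ' : ℂ[X][T;T⁻¹][ε] := inl (T (-1))
  have hυ : υ * υ' = 1 := by
    rw [← inl_mul, ← LaurentPolynomial.T_add, add_neg_cancel, LaurentPolynomial.T_zero, inl_one]
  have hε : (ε * ε : ℂ[X][T;T⁻¹][ε]) = 0 := eps_mul_eps
  rw [nsIdeal, Ideal.span_le]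
  simp only [Set.insert_subset_iff, Set.singleton_subset_iff, SetLike.mem_coe, RingHom.mem_ker,
    map_add, map_sub, map_mul, map_pow, aeval_X, nodeModelGens, Matrix.cons_val]
  refine ⟨?_, ?_, ?_, ?_, ?_, ?_⟩
  · linear_combination (-τ ^ 2 * (υ * υ' + 1)) * hυ
  · linear_combination τ * υ * ε * hυ
  · linear_combination (-τ ^ 2 * υ' * ε) * hυ
  · linear_combination υ * τ * υ' * hε
  · linear_combination υ ^ 2 * hε
  · linear_combination (τ * υ') ^ 2 * hε

def nodeModel : ANode →ₐ[ℂ] ℂ[X][T;T⁻¹][ε] :=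
  Ideal.Quotient.liftₐ nsIdeal (aeval nodeModelGens) fun _ h =>
    nsIdeal_le_ker_aeval_nodeModelGens h

lemma nodeModel_mk_X (i : Fin 5) : nodeModel (Ideal.Quotient.mk nsIdeal (X i)) = nodeModelGens i :=
  aeval_X _ i

lemma nodeModel_z1 : nodeModel z1 = inl (T 1) ^ 2 := nodeModel_mk_X 1

lemma nodeModel_z2 :
    nodeModel z2 = -(inl (LaurentPolynomial.C Polynomial.X) ^ 2 * inl (T (-1)) ^ 2) :=
  nodeModel_mk_X 2

lemma nodeModel_th1 : nodeModel th1 = inl (T 1) * ε := nodeModel_mk_X 3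

lemma nodeModel_th2 :
    nodeModel th2 = inl (LaurentPolynomial.C Polynomial.X) * inl (T (-1)) * ε :=
  nodeModel_mk_X 4

lemma nodeModel_smul (p : ℂ[X]) (x : ANode) : nodeModel (p • x) = p • nodeModel x := by
  rw [Algebra.smul_def, Algebra.smul_def, map_mul]
  change nodeModel (Polynomial.aeval tb p) * _ = _
  rw [← Polynomial.aeval_algHom_apply, show nodeModel tb = algebraMap ℂ[X] _ Polynomial.X from
    nodeModel_mk_X 0, Polynomial.aeval_algebraMap_apply, Polynomial.aeval_X_left_apply]

def nodeLaurent : ANode →ₗ[ℂ[X]] ℂ[X][T;T⁻¹] where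
  toFun x := fst (nodeModel x) + snd (nodeModel x)
  map_add' x y := by rw [map_add, fst_add, snd_add, add_add_add_comm]
  map_smul' p x := by rw [nodeModel_smul, fst_smul, snd_smul, smul_add, RingHom.id_apply]

lemma nodeLaurent_apply (x : ANode) :
    nodeLaurent x = fst (nodeModel x) + snd (nodeModel x) := rfl

def nodeExponent : BasisIdx → ℤ
  | Sum.inl _ => 0
  | Sum.inr (Sum.inl n) => 2 * (n + 1)
  | Sum.inr (Sum.inr (Sum.inl n)) => -(2 * (n + 1))
  | Sum.inr (Sum.inr (Sum.inr (Sum.inl n))) => 2 * n + 1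
  | Sum.inr (Sum.inr (Sum.inr (Sum.inr n))) => -(2 * n + 1)

lemma nodeExponent_injective : nodeExponent.Injective := by
  rintro (_ | n | n | n | n) (_ | m | m | m | m) h <;>
    simp only [nodeExponent, Sum.inl.injEq, Sum.inr.injEq, reduceCtorEq] at h ⊢ <;> omega

lemma nodeModel_z1_pow (n : ℕ) : nodeModel (z1 ^ n) = inl (T 1 ^ (2 * n)) := by
  rw [map_pow, nodeModel_z1, inl_pow, inl_pow, pow_mul]

lemma nodeModel_z2_pow (n : ℕ) : nodeModel (z2 ^ n) =
    inl ((-1) ^ n * LaurentPolynomial.C (Polynomial.X : ℂ[X]) ^ (2 * n) * T (-1) ^ (2 * n)) := by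
  rw [map_pow, nodeModel_z2]
  simp only [inl_mul, ← inl_pow, inl_neg, inl_one]
  ring

lemma nodeModel_z1_pow_mul_th1 (n : ℕ) :
    nodeModel (z1 ^ n * th1) = inl (T 1 ^ (2 * n + 1)) * ε := by
  rw [map_mul, nodeModel_z1_pow, nodeModel_th1, pow_succ, inl_mul, mul_assoc]

lemma nodeModel_z2_pow_mul_th2 (n : ℕ) : nodeModel (z2 ^ n * th2) =
    inl ((-1) ^ n * LaurentPolynomial.C (Polynomial.X : ℂ[X]) ^ (2 * n + 1) *
      T (-1) ^ (2 * n + 1)) * ε := by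
  rw [map_mul, nodeModel_z2_pow, nodeModel_th2]
  simp only [inl_mul, ← inl_pow]
  ring

lemma nodeLaurent_aBasis (α : BasisIdx) :
    ∃ c ≠ 0, nodeLaurent (aBasis α) = LaurentPolynomial.C c * T (nodeExponent α) := by
  have hX : ∀ k l : ℕ, ((-1) ^ k * Polynomial.X ^ l : ℂ[X]) ≠ 0 := fun k l =>
    mul_ne_zero (pow_ne_zero _ (neg_ne_zero.2 one_ne_zero)) (pow_ne_zero _ Polynomial.X_ne_zero)
  rcases α with _ | n | n | n | n <;> dsimp only [aBasis, nodeExponent]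
  · refine ⟨1, one_ne_zero, ?_⟩
    rw [nodeLaurent_apply, map_one, ← inl_one, DualNumber.fst_add_snd_inl, map_one,
      LaurentPolynomial.T_zero, one_mul]
  · refine ⟨1, one_ne_zero, ?_⟩
    rw [nodeLaurent_apply, nodeModel_z1_pow, DualNumber.fst_add_snd_inl, map_one, one_mul,
      LaurentPolynomial.T_pow]
    push_cast; ring_nf
  · refine ⟨(-1) ^ (n + 1) * Polynomial.X ^ (2 * (n + 1)), hX _ _, ?_⟩
    rw [nodeLaurent_apply, nodeModel_z2_pow, DualNumber.fst_add_snd_inl, LaurentPolynomial.T_pow,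
      map_mul, map_pow, map_pow, map_neg, map_one]
    push_cast; ring_nf
  · refine ⟨1, one_ne_zero, ?_⟩
    rw [nodeLaurent_apply, nodeModel_z1_pow_mul_th1, DualNumber.fst_add_snd_inl_mul_eps, map_one,
      one_mul, LaurentPolynomial.T_pow]
    push_cast; ring_nf
  · refine ⟨(-1) ^ n * Polynomial.X ^ (2 * n + 1), hX _ _, ?_⟩
    rw [nodeLaurent_apply, nodeModel_z2_pow_mul_th2, DualNumber.fst_add_snd_inl_mul_eps,
      LaurentPolynomial.T_pow, map_mul, map_pow, map_pow, map_neg, map_one]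
    push_cast; ring_nf

theorem linearIndependent_aBasis : LinearIndependent ℂ[X] aBasis :=
  LinearIndependent.of_comp nodeLaurent
    (LaurentPolynomial.linearIndependent_of_eq_C_mul_T nodeExponent_injective nodeLaurent_aBasis)

end LinearIndependence

/-- `A` is a free `ℂ[t]`-module with the indicated basis. -/
theorem ANode_free_over_Ct :
    LinearIndependent (Polynomial ℂ) aBasis ∧
      Submodule.span (Polynomial ℂ) (Set.range aBasis) = ⊤ :=
  ⟨linearIndependent_aBasis, span_range_aBasis_eq_top⟩

end
end

section
/- Let A be a commutative ring and t ∈ A a nilpotent element. Let Ô = A[z₁,z₂,θ₁,θ₂]/(z₁z₂ + t², z₁θ₂ − tθ₁, z₂θ₁ + tθ₂, θ₁θ₂, θ₁², θ₂²), and let L = A[z, z⁻¹][ε]/(ε²) be the ring of dual numbers over Laurent polynomials in one variable over A. Then the A-algebra homomorphism γ : Ô → L × L determined by z₁ ↦ (z, −t²z⁻¹), z₂ ↦ (−t²z⁻¹, z), θ₁ ↦ (ε, −tz⁻¹ε), θ₂ ↦ (tz⁻¹ε, ε) is well defined and injective. -/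
/-!
Every element of `Ô` can be written as `a(z₁) + z₂ b(z₂) + c(z₁) θ₁ + d(z₂) θ₂` with polynomials
`a, b, c, d` over `A`, since by the defining relations these elements are stable under
multiplication by each generator. To decide whether such an element is killed by `γ`, send `L`
to the dual numbers over `A[T, T⁻¹]`. On the first branch it becomes
`a(T) + T⁻¹ q(T⁻¹) + (c(T) + T⁻¹ r(T⁻¹)) ε`, whose part of nonnegative degree is `a(T) + c(T) ε`;
so `γ x = 0` forces `a = c = 0`, after which the second branch reads `T b(T) + d(T) ε = 0`.
-/

open MvPolynomial

noncomputable section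

/-- The relations `z₁z₂ + t², z₁θ₂ − tθ₁, z₂θ₁ + tθ₂, θ₁θ₂, θ₁², θ₂²` of the
deformation of the NS node with gluing parameter `t`; variables
`X 0 = z₁`, `X 1 = z₂`, `X 2 = θ₁`, `X 3 = θ₂`. -/
def nsDefIdeal (A : Type*) [CommRing A] (t : A) : Ideal (MvPolynomial (Fin 4) A) :=
  Ideal.span {X 0 * X 1 + C (t ^ 2), X 0 * X 3 - C t * X 2, X 1 * X 2 + C t * X 3,
    X 2 * X 3, X 2 ^ 2, X 3 ^ 2}

/-- `Ô`, the coordinate ring of the deformation of the NS node over `A`. -/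
abbrev Ohat (A : Type*) [CommRing A] (t : A) : Type _ :=
  MvPolynomial (Fin 4) A ⧸ nsDefIdeal A t

/-- The ideal `(zw − 1, ε²)` realizing `A[z,z⁻¹][ε]/(ε²)` as a quotient of `A[z,w,ε]`;
variables `X 0 = z`, `X 1 = w = z⁻¹`, `X 2 = ε`. -/
def ldIdeal (A : Type*) [CommRing A] : Ideal (MvPolynomial (Fin 3) A) :=
  Ideal.span {X 0 * X 1 - 1, X 2 ^ 2}

/-- The ring `L = A[z,z⁻¹][ε]/(ε²)`. -/
abbrev LRing (A : Type*) [CommRing A] : Type _ := MvPolynomial (Fin 3) A ⧸ ldIdeal A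

/-- `z ∈ L`. -/
def zL (A : Type*) [CommRing A] : LRing A := Ideal.Quotient.mk (ldIdeal A) (X 0)
/-- `z⁻¹ ∈ L`. -/
def zInv (A : Type*) [CommRing A] : LRing A := Ideal.Quotient.mk (ldIdeal A) (X 1)
/-- `ε ∈ L`. -/
def eps (A : Type*) [CommRing A] : LRing A := Ideal.Quotient.mk (ldIdeal A) (X 2)

namespace Polynomial

open LaurentPolynomial

variable {R : Type*} [CommSemiring R]

lemma aeval_eq_aeval_divX_mul_add {S : Type*} [Semiring S] [Algebra R S] (x : S)
    (p : R[X]) : aeval x p = aeval x p.divX * x + algebraMap R S (p.coeff 0) := by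
  conv_lhs => rw [← p.divX_mul_X_add]
  simp

def toLaurentInv : R[X] →ₐ[R] R[T;T⁻¹] :=
  invert.toAlgHom.comp toLaurentAlg

@[simp] lemma toLaurentInv_apply (p : R[X]) : toLaurentInv p = invert (toLaurent p) := rfl

lemma trunc_toLaurentInv_X_mul (q : R[X]) : trunc (toLaurentInv (X * q)) = 0 := by
  induction q using Polynomial.induction_on' with
  | add p q hp hq => rw [mul_add, map_add, map_add, hp, hq, add_zero]
  | monomial n a =>
    rw [X_mul_monomial, toLaurentInv_apply, toLaurent_C_mul_T, map_mul, invert_C, invert_T,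
      trunc_C_mul_T, if_neg (by omega)]

lemma eq_zero_of_toLaurent_add_toLaurentInv_X_mul {p q : R[X]}
    (h : toLaurent p + toLaurentInv (X * q) = 0) : p = 0 := by
  simpa only [map_add, trunc_toLaurent, trunc_toLaurentInv_X_mul, add_zero, map_zero] using
    congrArg trunc h

end Polynomial

namespace DualNumber

open TrivSqZeroExt

lemma inl_add_inl_mul_eps_eq_zero {R : Type*} [Semiring R] {p q : R} :
    (inl p + inl q * ε : DualNumber R) = 0 ↔ p = 0 ∧ q = 0 := by
  refine ⟨fun h ↦ ⟨?_, ?_⟩, fun ⟨hp, hq⟩ ↦ by simp [hp, hq]⟩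
  · simpa using congrArg fst h
  · simpa using congrArg snd h

end DualNumber

open scoped Polynomial

namespace Ohat

variable {A : Type*} [CommRing A] (t : A)

def gen (i : Fin 4) : Ohat A t := Ideal.Quotient.mk (nsDefIdeal A t) (X i)

local notation "z₁" => gen t 0
local notation "z₂" => gen t 1
local notation "θ₁" => gen t 2
local notation "θ₂" => gen t 3
local notation "τ" => algebraMap A (Ohat A t) t

lemma mk_C (a : A) : Ideal.Quotient.mk (nsDefIdeal A t) (C a) = algebraMap A (Ohat A t) a :=
  rfl

lemma mk_eq_zero_of_mem_relations {f : MvPolynomial (Fin 4) A}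
    (hf : f ∈ ({X 0 * X 1 + C (t ^ 2), X 0 * X 3 - C t * X 2, X 1 * X 2 + C t * X 3,
      X 2 * X 3, X 2 ^ 2, X 3 ^ 2} : Set _)) :
    Ideal.Quotient.mk (nsDefIdeal A t) f = 0 :=
  Ideal.Quotient.eq_zero_iff_mem.2 (Ideal.subset_span hf)

lemma z₁_mul_z₂ : z₁ * z₂ = -τ ^ 2 := by
  have h := mk_eq_zero_of_mem_relations t (f := X 0 * X 1 + C (t ^ 2)) (by simp)
  rw [map_add, map_mul, mk_C, map_pow] at h
  exact eq_neg_of_add_eq_zero_left h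

lemma z₁_mul_θ₂ : z₁ * θ₂ = τ * θ₁ := by
  have h := mk_eq_zero_of_mem_relations t (f := X 0 * X 3 - C t * X 2) (by simp)
  rwa [map_sub, map_mul, map_mul, mk_C, sub_eq_zero] at h

lemma z₂_mul_θ₁ : z₂ * θ₁ = -(τ * θ₂) := by
  have h := mk_eq_zero_of_mem_relations t (f := X 1 * X 2 + C t * X 3) (by simp)
  rw [map_add, map_mul, map_mul, mk_C] at h
  exact eq_neg_of_add_eq_zero_left h

lemma θ₁_mul_θ₂ : θ₁ * θ₂ = 0 :=
  (map_mul _ _ _).symm.trans (mk_eq_zero_of_mem_relations t (by simp))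

lemma θ₁_mul_θ₁ : θ₁ * θ₁ = 0 := by
  rw [← pow_two, gen, ← map_pow]
  exact mk_eq_zero_of_mem_relations t (by simp)

lemma θ₂_mul_θ₂ : θ₂ * θ₂ = 0 := by
  rw [← pow_two, gen, ← map_pow]
  exact mk_eq_zero_of_mem_relations t (by simp)

def normalForm (a b c d : A[X]) : Ohat A t :=
  Polynomial.aeval z₁ a + z₂ * Polynomial.aeval z₂ b + Polynomial.aeval z₁ c * θ₁ +
    Polynomial.aeval z₂ d * θ₂

lemma normalForm_add (a b c d a' b' c' d' : A[X]) :
    normalForm t a b c d + normalForm t a' b' c' d' =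
      normalForm t (a + a') (b + b') (c + c') (d + d') := by
  simp only [normalForm, map_add]
  ring

lemma normalForm_mul_z₁ (a b c d : A[X]) :
    normalForm t a b c d * z₁ =
      normalForm t (Polynomial.X * a - Polynomial.C (t ^ 2 * b.coeff 0))
        (Polynomial.C (-t ^ 2) * b.divX) (Polynomial.X * c + Polynomial.C (t * d.coeff 0))
        (Polynomial.C (-t ^ 2) * d.divX) := by
  have hb := Polynomial.aeval_eq_aeval_divX_mul_add z₂ b
  have hd := Polynomial.aeval_eq_aeval_divX_mul_add z₂ d
  simp only [normalForm, map_add, map_sub, map_mul, map_neg, Polynomial.aeval_X,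
    Polynomial.aeval_C, map_pow]
  linear_combination z₁ * z₂ * hb + z₁ * θ₂ * hd
    + (Polynomial.aeval z₂ b.divX * z₂ + algebraMap A _ (b.coeff 0)) * z₁_mul_z₂ t
    + (Polynomial.aeval z₂ d.divX * z₂ + algebraMap A _ (d.coeff 0)) * z₁_mul_θ₂ t
    + τ * Polynomial.aeval z₂ d.divX * z₂_mul_θ₁ t

lemma normalForm_mul_z₂ (a b c d : A[X]) :
    normalForm t a b c d * z₂ =
      normalForm t (Polynomial.C (-t ^ 2) * a.divX) (Polynomial.C (a.coeff 0) + Polynomial.X * b)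
        (Polynomial.C (-t ^ 2) * c.divX) (Polynomial.X * d - Polynomial.C (t * c.coeff 0)) := by
  have ha := Polynomial.aeval_eq_aeval_divX_mul_add z₁ a
  have hc := Polynomial.aeval_eq_aeval_divX_mul_add z₁ c
  simp only [normalForm, map_add, map_sub, map_mul, map_neg, Polynomial.aeval_X,
    Polynomial.aeval_C, map_pow]
  linear_combination z₂ * ha + Polynomial.aeval z₁ a.divX * z₁_mul_z₂ t + z₂ * θ₁ * hc
    + (Polynomial.aeval z₁ c.divX * z₁ + algebraMap A _ (c.coeff 0)) * z₂_mul_θ₁ t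
    - τ * Polynomial.aeval z₁ c.divX * z₁_mul_θ₂ t

lemma normalForm_mul_θ₁ (a b c d : A[X]) :
    normalForm t a b c d * θ₁ = normalForm t 0 0 a (Polynomial.C (-t) * b) := by
  simp only [normalForm, map_mul, map_neg, Polynomial.aeval_C, map_zero]
  linear_combination Polynomial.aeval z₂ b * z₂_mul_θ₁ t
    + Polynomial.aeval z₁ c * θ₁_mul_θ₁ t + Polynomial.aeval z₂ d * θ₁_mul_θ₂ t

lemma normalForm_mul_θ₂ (a b c d : A[X]) :
    normalForm t a b c d * θ₂ =
      normalForm t 0 0 (Polynomial.C t * a.divX) (Polynomial.X * b + Polynomial.C (a.coeff 0)) := by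
  have ha := Polynomial.aeval_eq_aeval_divX_mul_add z₁ a
  simp only [normalForm, map_add, map_mul, Polynomial.aeval_X, Polynomial.aeval_C, map_zero]
  linear_combination θ₂ * ha + Polynomial.aeval z₁ a.divX * z₁_mul_θ₂ t
    + Polynomial.aeval z₁ c * θ₁_mul_θ₂ t + Polynomial.aeval z₂ d * θ₂_mul_θ₂ t

lemma exists_normalForm (x : Ohat A t) : ∃ a b c d : A[X], x = normalForm t a b c d := by
  obtain ⟨f, rfl⟩ := Ideal.Quotient.mk_surjective x
  induction f using MvPolynomial.induction_on with
  | C a => exact ⟨Polynomial.C a, 0, 0, 0, by simp [normalForm, mk_C]⟩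
  | add p q hp hq =>
    obtain ⟨a, b, c, d, hp⟩ := hp
    obtain ⟨a', b', c', d', hq⟩ := hq
    exact ⟨_, _, _, _, by rw [map_add, hp, hq, normalForm_add]⟩
  | mul_X p i hp =>
    obtain ⟨a, b, c, d, hp⟩ := hp
    rw [map_mul, hp]
    fin_cases i
    · exact ⟨_, _, _, _, normalForm_mul_z₁ t a b c d⟩
    · exact ⟨_, _, _, _, normalForm_mul_z₂ t a b c d⟩
    · exact ⟨_, _, _, _, normalForm_mul_θ₁ t a b c d⟩
    · exact ⟨_, _, _, _, normalForm_mul_θ₂ t a b c d⟩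

lemma map_normalForm {R : Type*} [Semiring R] [Algebra A R] (f : Ohat A t →ₐ[A] R)
    (a b c d : A[X]) :
    f (normalForm t a b c d) = Polynomial.aeval (f z₁) a + f z₂ * Polynomial.aeval (f z₂) b +
      Polynomial.aeval (f z₁) c * f θ₁ + Polynomial.aeval (f z₂) d * f θ₂ := by
  simp only [normalForm, map_add, map_mul, Polynomial.aeval_algHom_apply]

end Ohat

namespace LRing

variable {A : Type*} [CommRing A]

lemma zL_mul_zInv : zL A * zInv A = 1 := by
  have h : Ideal.Quotient.mk (ldIdeal A) (X 0 * X 1 - 1) = 0 :=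
    Ideal.Quotient.eq_zero_iff_mem.2 (Ideal.subset_span (by simp))
  rwa [map_sub, map_mul, map_one, sub_eq_zero] at h

lemma eps_mul_eps : eps A * eps A = 0 := by
  rw [← pow_two, eps, ← map_pow]
  exact Ideal.Quotient.eq_zero_iff_mem.2 (Ideal.subset_span (by simp))

section DualNumber

open LaurentPolynomial TrivSqZeroExt DualNumber

def toDualNumber : LRing A →ₐ[A] DualNumber A[T;T⁻¹] :=
  Ideal.Quotient.liftₐ _ (aeval ![inl (T 1), inl (T (-1)), ε]) fun f hf ↦ by
    refine (Ideal.span_le (I := RingHom.ker _)).2 ?_ hf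
    simp only [Set.insert_subset_iff, Set.singleton_subset_iff, SetLike.mem_coe,
      RingHom.mem_ker, map_sub, map_mul, map_one, map_pow, aeval_X, Matrix.cons_val,
      Matrix.cons_val_zero, Matrix.cons_val_one, eps_pow_two, and_true]
    rw [← inl_mul, ← T_add, add_neg_cancel, T_zero, inl_one, sub_self]

@[simp] lemma toDualNumber_zL : toDualNumber (zL A) = inl (T 1) :=
  (Ideal.Quotient.lift_mk _ _ _).trans (aeval_X _ _)

@[simp] lemma toDualNumber_zInv : toDualNumber (zInv A) = inl (T (-1)) :=
  (Ideal.Quotient.lift_mk _ _ _).trans (aeval_X _ _)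

@[simp] lemma toDualNumber_eps : toDualNumber (eps A) = ε :=
  (Ideal.Quotient.lift_mk _ _ _).trans (aeval_X _ _)

end DualNumber

end LRing

section BranchMap

open LaurentPolynomial TrivSqZeroExt DualNumber
open Polynomial (toLaurent toLaurentAlg toLaurentInv)

variable {A : Type*} [CommRing A] (t : A)

local notation "τ" => algebraMap A (LRing A) t

def nsBranchValues : Fin 4 → LRing A × LRing A :=
  ![(zL A, -(τ ^ 2 * zInv A)), (-(τ ^ 2 * zInv A), zL A),
    (eps A, -(τ * zInv A * eps A)), (τ * zInv A * eps A, eps A)]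

lemma nsDefIdeal_le_ker_aeval_nsBranchValues :
    nsDefIdeal A t ≤ RingHom.ker (aeval (nsBranchValues t)) := by
  have hz := LRing.zL_mul_zInv (A := A)
  have hε := LRing.eps_mul_eps (A := A)
  simp only [nsDefIdeal, Ideal.span_le, Set.insert_subset_iff, Set.singleton_subset_iff,
    SetLike.mem_coe, RingHom.mem_ker]
  simp only [nsBranchValues, map_add, map_sub, map_mul, map_pow, aeval_X, algHom_C,
    Matrix.cons_val, Matrix.cons_val_zero, Matrix.cons_val_one, Prod.algebraMap_apply,
    Prod.mk_mul_mk, Prod.pow_mk, Prod.mk_add_mk, Prod.mk_sub_mk, Prod.ext_iff, Prod.fst_zero,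
    Prod.snd_zero]
  refine ⟨⟨?_, ?_⟩, ⟨?_, ?_⟩, ⟨?_, ?_⟩, ⟨?_, ?_⟩, ⟨?_, ?_⟩, ?_, ?_⟩
  · linear_combination -τ ^ 2 * hz
  · linear_combination -τ ^ 2 * hz
  · linear_combination τ * eps A * hz
  · ring
  · ring
  · linear_combination -τ * eps A * hz
  · linear_combination τ * zInv A * hε
  · linear_combination -τ * zInv A * hε
  · linear_combination hε
  · linear_combination τ ^ 2 * zInv A ^ 2 * hε
  · linear_combination τ ^ 2 * zInv A ^ 2 * hε
  · linear_combination hε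

def nsBranchMap : Ohat A t →ₐ[A] LRing A × LRing A :=
  Ideal.Quotient.liftₐ _ (aeval (nsBranchValues t)) fun _ hf ↦
    nsDefIdeal_le_ker_aeval_nsBranchValues t hf

@[simp] lemma nsBranchMap_mk_X (i : Fin 4) :
    nsBranchMap t (Ideal.Quotient.mk _ (X i)) = nsBranchValues t i :=
  (Ideal.Quotient.lift_mk _ _ _).trans (aeval_X _ i)

lemma toDualNumber_fst_nsBranchMap_normalForm (a b c d : A[X]) :
    LRing.toDualNumber (nsBranchMap t (Ohat.normalForm t a b c d)).1 =
      inl (toLaurent a + toLaurentInv (Polynomial.X * (Polynomial.C (-t ^ 2) *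
        Polynomial.aeval (Polynomial.C (-t ^ 2) * Polynomial.X) b))) +
      inl (toLaurent c + toLaurentInv (Polynomial.X * (Polynomial.C t *
        Polynomial.aeval (Polynomial.C (-t ^ 2) * Polynomial.X) d))) * ε := by
  set f := LRing.toDualNumber.comp ((AlgHom.fst A _ _).comp (nsBranchMap t))
  obtain ⟨hz₁, hz₂, hθ₁, hθ₂⟩ :
      f (Ohat.gen t 0) = inlAlgHom A A[T;T⁻¹] A[T;T⁻¹] (toLaurentAlg Polynomial.X) ∧
      f (Ohat.gen t 1) =
        inlAlgHom A A[T;T⁻¹] A[T;T⁻¹] (toLaurentInv (Polynomial.C (-t ^ 2) * Polynomial.X)) ∧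
      f (Ohat.gen t 2) = ε ∧
      f (Ohat.gen t 3) =
        inlAlgHom A A[T;T⁻¹] A[T;T⁻¹] (toLaurentInv (Polynomial.C t * Polynomial.X)) * ε := by
    refine ⟨?_, ?_, ?_, ?_⟩ <;>
      simp [f, Ohat.gen, nsBranchValues, algebraMap_eq_inl', ← LaurentPolynomial.C_eq_algebraMap]
  change f _ = _
  rw [Ohat.map_normalForm, hz₁, hz₂, hθ₁, hθ₂]
  simp only [Polynomial.aeval_algHom_apply, Polynomial.aeval_X_left, AlgHom.id_apply]
  simp only [inlAlgHom_apply, Polynomial.toLaurentAlg_apply, map_mul, inl_add, inl_mul]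
  ring

lemma toDualNumber_snd_nsBranchMap_normalForm (a b c d : A[X]) :
    LRing.toDualNumber (nsBranchMap t (Ohat.normalForm t a b c d)).2 =
      inl (toLaurentInv (Polynomial.aeval (Polynomial.C (-t ^ 2) * Polynomial.X) a) +
        toLaurent (Polynomial.X * b)) +
      inl (toLaurent d + toLaurentInv (Polynomial.X * (Polynomial.C (-t) *
        Polynomial.aeval (Polynomial.C (-t ^ 2) * Polynomial.X) c))) * ε := by
  set f := LRing.toDualNumber.comp ((AlgHom.snd A _ _).comp (nsBranchMap t))
  obtain ⟨hz₁, hz₂, hθ₁, hθ₂⟩ :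
      f (Ohat.gen t 0) =
        inlAlgHom A A[T;T⁻¹] A[T;T⁻¹] (toLaurentInv (Polynomial.C (-t ^ 2) * Polynomial.X)) ∧
      f (Ohat.gen t 1) = inlAlgHom A A[T;T⁻¹] A[T;T⁻¹] (toLaurentAlg Polynomial.X) ∧
      f (Ohat.gen t 2) =
        inlAlgHom A A[T;T⁻¹] A[T;T⁻¹] (toLaurentInv (Polynomial.C (-t) * Polynomial.X)) * ε ∧
      f (Ohat.gen t 3) = ε := by
    refine ⟨?_, ?_, ?_, ?_⟩ <;>
      simp [f, Ohat.gen, nsBranchValues, algebraMap_eq_inl', ← LaurentPolynomial.C_eq_algebraMap]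
  change f _ = _
  rw [Ohat.map_normalForm, hz₁, hz₂, hθ₁, hθ₂]
  simp only [Polynomial.aeval_algHom_apply, Polynomial.aeval_X_left, AlgHom.id_apply]
  simp only [inlAlgHom_apply, Polynomial.toLaurentAlg_apply, map_mul, inl_add, inl_mul]
  ring

lemma nsBranchMap_injective : Function.Injective (nsBranchMap t) := by
  rw [injective_iff_map_eq_zero]
  intro x hx
  obtain ⟨a, b, c, d, rfl⟩ := Ohat.exists_normalForm t x
  have h₁ := toDualNumber_fst_nsBranchMap_normalForm t a b c d
  rw [hx, Prod.fst_zero, map_zero, eq_comm, inl_add_inl_mul_eps_eq_zero] at h₁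
  obtain rfl := Polynomial.eq_zero_of_toLaurent_add_toLaurentInv_X_mul h₁.1
  obtain rfl := Polynomial.eq_zero_of_toLaurent_add_toLaurentInv_X_mul h₁.2
  have h₂ := toDualNumber_snd_nsBranchMap_normalForm t 0 b 0 d
  rw [hx, Prod.snd_zero, map_zero, eq_comm, inl_add_inl_mul_eps_eq_zero] at h₂
  simp only [map_zero, zero_add, mul_zero, add_zero, Polynomial.toLaurent_eq_zero] at h₂
  obtain rfl := Polynomial.isRegular_X.left (h₂.1.trans (mul_zero _).symm)
  obtain rfl := h₂.2
  simp [Ohat.normalForm]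

end BranchMap

theorem nsNode_branch_restriction_injective_general (A : Type*) [CommRing A] (t : A) :
    ∃ γ : Ohat A t →ₐ[A] LRing A × LRing A,
      γ (Ideal.Quotient.mk (nsDefIdeal A t) (X 0)) =
        (zL A, -(algebraMap A (LRing A) t ^ 2 * zInv A)) ∧
      γ (Ideal.Quotient.mk (nsDefIdeal A t) (X 1)) =
        (-(algebraMap A (LRing A) t ^ 2 * zInv A), zL A) ∧
      γ (Ideal.Quotient.mk (nsDefIdeal A t) (X 2)) =
        (eps A, -(algebraMap A (LRing A) t * zInv A * eps A)) ∧
      γ (Ideal.Quotient.mk (nsDefIdeal A t) (X 3)) =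
        (algebraMap A (LRing A) t * zInv A * eps A, eps A) ∧
      Function.Injective γ :=
  ⟨nsBranchMap t, nsBranchMap_mk_X t 0, nsBranchMap_mk_X t 1, nsBranchMap_mk_X t 2,
    nsBranchMap_mk_X t 3, nsBranchMap_injective t⟩

theorem nsNode_branch_restriction_injective (A : Type*) [CommRing A] (t : A)
    (ht : IsNilpotent t) :
    ∃ γ : Ohat A t →ₐ[A] LRing A × LRing A,
      γ (Ideal.Quotient.mk (nsDefIdeal A t) (X 0)) =
        (zL A, -(algebraMap A (LRing A) t ^ 2 * zInv A)) ∧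
      γ (Ideal.Quotient.mk (nsDefIdeal A t) (X 1)) =
        (-(algebraMap A (LRing A) t ^ 2 * zInv A), zL A) ∧
      γ (Ideal.Quotient.mk (nsDefIdeal A t) (X 2)) =
        (eps A, -(algebraMap A (LRing A) t * zInv A * eps A)) ∧
      γ (Ideal.Quotient.mk (nsDefIdeal A t) (X 3)) =
        (algebraMap A (LRing A) t * zInv A * eps A, eps A) ∧
      Function.Injective γ :=
  nsNode_branch_restriction_injective_general A t

end
end

section
/- Let R be a Noetherian commutative ring, F₁ a finitely generated R-module, F₂ a finitely generated flat R-module, and f : F₁ → F₂ an R-linear map. Then there exists an ideal I ⊆ R such that for every ideal J ⊆ R the image of f is contained in the submodule J·F₂ if and only if I ⊆ J. (Equivalently: among all ideals J with f ⊗_R R/J = 0 there is a smallest one, so there is a largest closed subscheme of Spec R over which f vanishes.) -/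
/-!
STATEMENT 17. Let `R` be a Noetherian commutative ring, `F₁` a finitely generated
`R`-module, `F₂` a finitely generated flat `R`-module, and `f : F₁ → F₂` an
`R`-linear map. Then there is an ideal `I ⊆ R` such that for every ideal `J ⊆ R`,
the image of `f` is contained in `J·F₂` if and only if `I ≤ J`.
-/

/-- Coordinates of an element of `J • ⊤` in a finsupp module lie in `J`. -/
lemma coord_mem_of_mem_smul_top {R : Type*} [CommRing R] {ι : Type*}
    {J : Ideal R} {y : ι →₀ R} (hy : y ∈ J • (⊤ : Submodule R (ι →₀ R))) (m : ι) :
    y m ∈ J := by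
  refine Submodule.smul_induction_on hy ?_ ?_
  · intro a ha n _
    simpa using J.mul_mem_right (n m) ha
  · intro a b ha hb
    simpa using J.add_mem ha hb

theorem exists_smallest_vanishing_ideal
    (R : Type*) [CommRing R] [IsNoetherianRing R]
    (F₁ F₂ : Type*) [AddCommGroup F₁] [Module R F₁] [AddCommGroup F₂] [Module R F₂]
    [Module.Finite R F₁] [Module.Finite R F₂] [Module.Flat R F₂]
    (f : F₁ →ₗ[R] F₂) :
    ∃ I : Ideal R, ∀ J : Ideal R,
      LinearMap.range f ≤ J • (⊤ : Submodule R F₂) ↔ I ≤ J := by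
  -- `F₂` is projective: finitely presented (Noetherian) and flat, so locally free.
  have hfp : Module.FinitePresentation R F₂ := Module.finitePresentation_of_finite R F₂
  have hproj : Module.Projective R F₂ := by
    apply Module.projective_of_localization_maximal
    intro P hP
    have : Module.Free (Localization.AtPrime P) (LocalizedModule P.primeCompl F₂) :=
      Module.free_of_flat_of_isLocalRing
    infer_instance
  obtain ⟨s, hs⟩ := (Module.projective_def (R := R) (P := F₂)).mp hproj
  -- `I` is generated by all coordinates of images under `s ∘ f`.
  refine ⟨Ideal.span {r | ∃ x m, s (f x) m = r}, fun J => ?_⟩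
  constructor
  · intro h
    rw [Ideal.span_le]
    rintro r ⟨x, m, rfl⟩
    have hx : f x ∈ J • (⊤ : Submodule R F₂) := h ⟨x, rfl⟩
    have : s (f x) ∈ J • (⊤ : Submodule R (F₂ →₀ R)) := by
      have := Submodule.map_smul'' J (⊤ : Submodule R F₂) s
      have hmem : s (f x) ∈ Submodule.map s (J • (⊤ : Submodule R F₂)) :=
        ⟨f x, hx, rfl⟩
      rw [this] at hmem
      exact Submodule.smul_mono le_rfl le_top hmem
    exact coord_mem_of_mem_smul_top this m
  · intro hIJ
    rintro _ ⟨x, rfl⟩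
    have hfx : f x = (Finsupp.linearCombination R id) (s (f x)) := (hs (f x)).symm
    rw [hfx, Finsupp.linearCombination_apply, Finsupp.sum]
    apply Submodule.sum_mem
    intro m _
    refine Submodule.smul_mem_smul ?_ trivial
    exact hIJ (Ideal.subset_span ⟨x, m, rfl⟩)
end
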